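/- Let f = Σ_{r=0}^n x_r^{d_1} g_r be a CW-Nagata polynomial of bidegree (d_1,d_2). For every j with 0 ≤ j ≤ d_2, dim_K A_{(d_1,j)} = f_{d_2−j}, the number of monic monomials of degree d_2−j in u_1,…,u_m dividing at least one g_r. -/

import Mathlib

open MvPolynomial

namespace CW

variable {σ K : Type*} [CommSemiring K]

/-- A generic "monomial contraction-type" action of the polynomial ring on itself,
determined by a structure coefficient `ν c a` (the coefficient produced when the
operator monomial with exponent `a` acts on the monomial with exponent `c`). -/
noncomputable def genAct (ν : (σ →₀ ℕ) → (σ →₀ ℕ) → K) (α f : MvPolynomial σ K) :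
    MvPolynomial σ K :=
  Finsupp.sum (AddMonoidAlgebra.coeff α) fun a ca =>
    Finsupp.sum (AddMonoidAlgebra.coeff f) fun c cf => monomial (c - a) (ν c a * (ca * cf))

theorem genAct_zero_left (ν : (σ →₀ ℕ) → (σ →₀ ℕ) → K) (f : MvPolynomial σ K) :
    genAct ν 0 f = 0 :=
  Finsupp.sum_zero_index (h := fun a ca =>
    Finsupp.sum (AddMonoidAlgebra.coeff f) fun c cf => monomial (c - a) (ν c a * (ca * cf)))

theorem genAct_zero_right (ν : (σ →₀ ℕ) → (σ →₀ ℕ) → K) (α : MvPolynomial σ K) :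
    genAct ν α 0 = 0 := by
  unfold genAct
  simp only [AddMonoidAlgebra.coeff_zero, Finsupp.sum, Finsupp.support_zero, Finset.sum_empty,
    Finset.sum_const_zero]

theorem genAct_add_left (ν : (σ →₀ ℕ) → (σ →₀ ℕ) → K) (α β f : MvPolynomial σ K) :
    genAct ν (α + β) f = genAct ν α f + genAct ν β f := by
  unfold genAct
  rw [AddMonoidAlgebra.coeff_add]
  apply Finsupp.sum_add_index'
  · intro a
    simp only [mul_zero, zero_mul, map_zero, Finsupp.sum, Finset.sum_const_zero]
  · intro a b₁ b₂
    rw [← Finsupp.sum_add]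
    apply Finsupp.sum_congr
    intro c _
    rw [add_mul, mul_add, map_add]

theorem genAct_add_right (ν : (σ →₀ ℕ) → (σ →₀ ℕ) → K) (α f g : MvPolynomial σ K) :
    genAct ν α (f + g) = genAct ν α f + genAct ν α g := by
  unfold genAct
  rw [← Finsupp.sum_add]
  apply Finsupp.sum_congr
  intro a _
  rw [AddMonoidAlgebra.coeff_add]
  apply Finsupp.sum_add_index'
  · intro c
    simp only [mul_zero, map_zero]
  · intro c c₁ c₂
    rw [mul_add, mul_add, map_add]

theorem genAct_monomial (ν : (σ →₀ ℕ) → (σ →₀ ℕ) → K) (a c : σ →₀ ℕ) (r s : K) :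
    genAct ν (monomial a r) (monomial c s) = monomial (c - a) (ν c a * (r * s)) := by
  unfold genAct
  rw [← single_eq_monomial a r, ← single_eq_monomial c s]
  rw [AddMonoidAlgebra.coeff_single, AddMonoidAlgebra.coeff_single]
  rw [Finsupp.sum_single_index, Finsupp.sum_single_index]
  · simp only [mul_zero, map_zero]
  · simp only [mul_zero, zero_mul, map_zero, Finsupp.sum, Finset.sum_const_zero]

theorem genAct_mul {ν : (σ →₀ ℕ) → (σ →₀ ℕ) → K}
    (hν : ∀ c a b, ν c (a + b) = ν c b * ν (c - b) a) (α β f : MvPolynomial σ K) :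
    genAct ν (α * β) f = genAct ν α (genAct ν β f) := by
  induction α using MvPolynomial.induction_on' with
  | add p q hp hq => rw [add_mul, genAct_add_left, hp, hq, genAct_add_left]
  | monomial a r =>
    induction β using MvPolynomial.induction_on' with
    | add p q hp hq =>
      rw [mul_add, genAct_add_left, hp, hq, ← genAct_add_right, genAct_add_left]
    | monomial b s =>
      induction f using MvPolynomial.induction_on' with
      | add p q hp hq =>
        rw [genAct_add_right, hp, hq, ← genAct_add_right, ← genAct_add_right]
      | monomial c t =>
        rw [monomial_mul, genAct_monomial, genAct_monomial, genAct_monomial,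
          show c - (a + b) = c - b - a from by rw [tsub_tsub, add_comm], hν]
        congr 1
        ring

/-- The annihilator ideal of `f` under the action `genAct ν`. -/
noncomputable def annG (ν : (σ →₀ ℕ) → (σ →₀ ℕ) → K)
    (hν : ∀ c a b, ν c (a + b) = ν c b * ν (c - b) a) (f : MvPolynomial σ K) :
    Ideal (MvPolynomial σ K) where
  carrier := {α | genAct ν α f = 0}
  zero_mem' := genAct_zero_left ν f
  add_mem' := by
    intro a b ha hb
    show genAct ν (a + b) f = 0
    rw [genAct_add_left, ha, hb, add_zero]
  smul_mem' := by
    intro c α hα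
    show genAct ν (c * α) f = 0
    rw [genAct_mul hν, hα, genAct_zero_right]

/-- Structure coefficient of the contraction (apolarity) action: `X^a` sends `x^c`
to `x^(c-a)` if `a ≤ c` and to `0` otherwise. -/
noncomputable def cnu (c a : σ →₀ ℕ) : K :=
  open scoped Classical in if a ≤ c then 1 else 0

theorem cnu_mul (c a b : σ →₀ ℕ) :
    (cnu c (a + b) : K) = cnu c b * cnu (c - b) a := by
  classical
  unfold cnu
  by_cases hb : b ≤ c
  · by_cases ha : a ≤ c - b
    · have h : a + b ≤ c := (le_tsub_iff_right hb).mp ha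
      simp [hb, ha, h]
    · have h : ¬ a + b ≤ c := fun h => ha ((le_tsub_iff_right hb).mpr h)
      simp [hb, ha, h]
  · have h : ¬ a + b ≤ c := fun h => hb (le_trans le_add_self h)
    simp [hb, h]

/-- The contraction action `α ∘ f`. -/
noncomputable def cAct (α f : MvPolynomial σ K) : MvPolynomial σ K :=
  genAct cnu α f

/-- The annihilator `Ann(f)` of `f` under the contraction action, as an ideal. -/
noncomputable def cAnn (f : MvPolynomial σ K) : Ideal (MvPolynomial σ K) :=
  annG cnu cnu_mul f

theorem mem_cAnn {f α : MvPolynomial σ K} : α ∈ cAnn f ↔ cAct α f = 0 := Iff.rfl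

/-- The `K`-submodule of polynomials all of whose monomials satisfy `P`. -/
noncomputable def bihom (K : Type*) [CommSemiring K] {σ : Type*} (P : (σ →₀ ℕ) → Prop) :
    Submodule K (MvPolynomial σ K) where
  carrier := {p | ∀ c ∈ p.support, P c}
  zero_mem' := by
    intro c hc
    simp at hc
  add_mem' := by
    classical
    intro p q hp hq c hc
    rcases Finset.mem_union.mp (MvPolynomial.support_add hc) with h | h
    · exact hp c h
    · exact hq c h
  smul_mem' := by
    intro k p hp c hc
    exact hp c (MvPolynomial.support_smul hc)

/-- The x-degree of an exponent vector. -/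
def degX {n m : ℕ} (c : (Fin (n + 1) ⊕ Fin m) →₀ ℕ) : ℕ := ∑ r, c (Sum.inl r)

/-- The u-degree of an exponent vector. -/
def degU {n m : ℕ} (c : (Fin (n + 1) ⊕ Fin m) →₀ ℕ) : ℕ := ∑ k, c (Sum.inr k)

/-- The bihomogeneous component `T_(i,j)`. -/
noncomputable def Tbi (K : Type*) [CommSemiring K] {n m : ℕ} (i j : ℕ) :
    Submodule K (MvPolynomial (Fin (n + 1) ⊕ Fin m) K) :=
  bihom K fun c => degX c = i ∧ degU c = j

/-- The bigraded component `A_(i,j)` of `A = T ⧸ Ann(f)`: the image of `T_(i,j)`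
in the quotient. -/
noncomputable def Abi {K : Type*} [Field K] {n m : ℕ}
    (f : MvPolynomial (Fin (n + 1) ⊕ Fin m) K) (i j : ℕ) :
    Submodule K (MvPolynomial (Fin (n + 1) ⊕ Fin m) K ⧸ cAnn f) :=
  (Tbi K i j).map (Ideal.Quotient.mkₐ K (cAnn f)).toLinearMap

/-! Since `Ann(f)` is the kernel of `α ↦ α ∘ f`, the component `A_(d₁,j)` is isomorphic to the
space of contractions `α ∘ f` with `α ∈ T_(d₁,j)`. A monomial `X^c` of bidegree `(d₁, j)` kills
`f` unless `c = d₁ e_r + b` with `b ≤ g_r`; as `d₁ ≥ 1` this `r` is unique, and then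
`X^c ∘ f = u^(g_r - b)`. Hence the contractions span exactly the monomials `u^s` with `s ≤ g_r`
for some `r` and `|s| = d₂ - j`, and distinct monomials are linearly independent. -/

section Contraction

variable {σ K : Type*} [CommSemiring K]

theorem cAct_monomial_monomial (a c : σ →₀ ℕ) (r s : K) :
    cAct (monomial a r) (monomial c s) = if a ≤ c then monomial (c - a) (r * s) else 0 := by
  rw [cAct, genAct_monomial, cnu]
  split_ifs <;> simp

theorem cAct_sum_right {ι : Type*} (α : MvPolynomial σ K) (s : Finset ι)
    (h : ι → MvPolynomial σ K) : cAct α (∑ i ∈ s, h i) = ∑ i ∈ s, cAct α (h i) := by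
  induction s using Finset.cons_induction with
  | empty => exact genAct_zero_right cnu α
  | cons i s hi ih =>
    rw [Finset.sum_cons, Finset.sum_cons, ← ih]
    exact genAct_add_right cnu α _ _

theorem cAct_C (k : K) (p : MvPolynomial σ K) : cAct (C k) p = k • p := by
  induction p using MvPolynomial.induction_on' with
  | add p q hp hq => rw [cAct, genAct_add_right, ← cAct, ← cAct, hp, hq, smul_add]
  | monomial c s => simp [← monomial_zero', cAct_monomial_monomial, smul_monomial]

theorem cAct_smul_left (k : K) (α f : MvPolynomial σ K) : cAct (k • α) f = k • cAct α f := by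
  rw [smul_eq_C_mul, cAct, genAct_mul cnu_mul, ← cAct, ← cAct, cAct_C]

noncomputable def cActLinearMap (f : MvPolynomial σ K) :
    MvPolynomial σ K →ₗ[K] MvPolynomial σ K where
  toFun α := cAct α f
  map_add' α β := genAct_add_left cnu α β f
  map_smul' k α := cAct_smul_left k α f

theorem ker_cActLinearMap (f : MvPolynomial σ K) :
    LinearMap.ker (cActLinearMap f) = (cAnn f).restrictScalars K :=
  rfl

end Contraction

theorem _root_.LinearMap.finrank_map_eq_of_ker_eq {R M N P : Type*} [Ring R]
    [AddCommGroup M] [AddCommGroup N] [AddCommGroup P] [Module R M] [Module R N] [Module R P]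
    {φ : M →ₗ[R] N} {ψ : M →ₗ[R] P} (h : LinearMap.ker φ = LinearMap.ker ψ)
    (W : Submodule R M) : Module.finrank R (W.map φ) = Module.finrank R (W.map ψ) := by
  calc Module.finrank R (W.map φ)
      = Module.finrank R (LinearMap.range (φ.domRestrict W)) := by
        rw [LinearMap.range_domRestrict]
    _ = Module.finrank R (W ⧸ LinearMap.ker (φ.domRestrict W)) :=
        (φ.domRestrict W).quotKerEquivRange.finrank_eq.symm
    _ = Module.finrank R (W ⧸ LinearMap.ker (ψ.domRestrict W)) := by
        rw [LinearMap.ker_domRestrict, LinearMap.ker_domRestrict, h]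
    _ = Module.finrank R (LinearMap.range (ψ.domRestrict W)) :=
        (ψ.domRestrict W).quotKerEquivRange.finrank_eq
    _ = Module.finrank R (W.map ψ) := by
        rw [LinearMap.range_domRestrict]

theorem finrank_Abi_eq {K : Type*} [Field K] {n m : ℕ}
    (f : MvPolynomial (Fin (n + 1) ⊕ Fin m) K) (i j : ℕ) :
    Module.finrank K (Abi f i j) = Module.finrank K ((Tbi K i j).map (cActLinearMap f)) := by
  refine LinearMap.finrank_map_eq_of_ker_eq ?_ _
  ext α
  simp [ker_cActLinearMap, Ideal.Quotient.eq_zero_iff_mem]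

section Exponents

variable {α β : Type*}

theorem _root_.Finsupp.degree_tsub_of_le {a b : α →₀ ℕ} (h : a ≤ b) :
    (b - a).degree = b.degree - a.degree := by
  have h' := congrArg Finsupp.degree (tsub_add_cancel_of_le h)
  rw [map_add] at h'
  omega

theorem _root_.Finsupp.eq_of_le_of_degree_eq {a b : α →₀ ℕ} (hle : a ≤ b)
    (hdeg : a.degree = b.degree) : a = b := by
  have h0 : (b - a).degree = 0 := by rw [Finsupp.degree_tsub_of_le hle, hdeg, tsub_self]
  exact le_antisymm hle (tsub_eq_zero_iff_le.mp ((Finsupp.degree_eq_zero_iff _).mp h0))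

theorem _root_.Finsupp.sumElim_le_sumElim_iff {a a' : α →₀ ℕ} {b b' : β →₀ ℕ} :
    Finsupp.sumElim a b ≤ Finsupp.sumElim a' b' ↔ a ≤ a' ∧ b ≤ b' := by
  simp only [Finsupp.le_def, Sum.forall, Finsupp.sumElim_inl, Finsupp.sumElim_inr]

theorem _root_.Finsupp.sumElim_tsub_sumElim (a a' : α →₀ ℕ) (b b' : β →₀ ℕ) :
    Finsupp.sumElim a' b' - Finsupp.sumElim a b = Finsupp.sumElim (a' - a) (b' - b) := by
  ext (_ | _) <;> rfl

variable {n m : ℕ}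

theorem degX_sumElim (a : Fin (n + 1) →₀ ℕ) (b : Fin m →₀ ℕ) :
    degX (Finsupp.sumElim a b) = a.degree :=
  (Finsupp.degree_eq_sum a).symm

theorem degU_sumElim (a : Fin (n + 1) →₀ ℕ) (b : Fin m →₀ ℕ) :
    degU (Finsupp.sumElim a b) = b.degree :=
  (Finsupp.degree_eq_sum b).symm

end Exponents

theorem Tbi_eq_span (K : Type*) [CommSemiring K] {n m : ℕ} (i j : ℕ) :
    Tbi K i j = Submodule.span K ((monomial · 1) ''
      {c : (Fin (n + 1) ⊕ Fin m) →₀ ℕ | degX c = i ∧ degU c = j}) :=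
  restrictSupport_eq_span _ _

theorem finrank_restrictSupport {σ K : Type*} [Field K] (s : Finset (σ →₀ ℕ)) :
    Module.finrank K (restrictSupport K (s : Set (σ →₀ ℕ))) = s.card := by
  rw [Module.finrank_eq_card_basis (basisRestrictSupport K _)]
  simp

section Nagata

variable (K : Type*) [CommSemiring K] {n m : ℕ} (d₁ : ℕ) (g : Fin (n + 1) → (Fin m →₀ ℕ))

noncomputable def nagata : MvPolynomial (Fin (n + 1) ⊕ Fin m) K :=
  ∑ r, X (Sum.inl r) ^ d₁ * monomial ((g r).mapDomain Sum.inr) 1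

/-- The paper's `f_e` is the cardinality of this set. -/
noncomputable def nagataDivisors (e : ℕ) : Finset (Fin m →₀ ℕ) :=
  ((Finset.univ : Finset (Fin (n + 1))).biUnion fun r => Finset.Iic (g r)).filter
    fun s => (∑ k, s k) = e

theorem nagata_eq_sum_monomial :
    nagata K d₁ g = ∑ r, monomial (Finsupp.sumElim (Finsupp.single r d₁) (g r)) 1 := by
  refine Finset.sum_congr rfl fun r _ => ?_
  rw [X_pow_eq_monomial, monomial_mul, one_mul, Finsupp.sumElim_eq_add, Finsupp.mapDomain_single]

variable {K d₁ g}

theorem cAct_monomial_nagata (c : (Fin (n + 1) ⊕ Fin m) →₀ ℕ) :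
    cAct (monomial c 1) (nagata K d₁ g) =
      ∑ r, if c ≤ Finsupp.sumElim (Finsupp.single r d₁) (g r) then
        monomial (Finsupp.sumElim (Finsupp.single r d₁) (g r) - c) 1 else 0 := by
  simp only [nagata_eq_sum_monomial, cAct_sum_right, cAct_monomial_monomial, mul_one]

theorem cAct_monomial_sumElim_nagata (hd₁ : d₁ ≠ 0) {r : Fin (n + 1)} {b : Fin m →₀ ℕ}
    (hb : b ≤ g r) :
    cAct (monomial (Finsupp.sumElim (Finsupp.single r d₁) b) 1) (nagata K d₁ g) =
      monomial (Finsupp.sumElim 0 (g r - b)) 1 := by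
  rw [cAct_monomial_nagata, Finset.sum_eq_single r]
  · rw [if_pos (Finsupp.sumElim_le_sumElim_iff.mpr ⟨le_rfl, hb⟩), Finsupp.sumElim_tsub_sumElim,
      tsub_self]
  · intro r' _ hr'
    refine if_neg fun hle => hd₁ ?_
    have h := (Finsupp.sumElim_le_sumElim_iff.mp hle).1 r
    simpa [Finsupp.single_apply, Ne.symm hr'] using h
  · simp

theorem eq_sumElim_of_le_nagata_exponent {c : (Fin (n + 1) ⊕ Fin m) →₀ ℕ} (hc : degX c = d₁)
    {r : Fin (n + 1)} (hle : c ≤ Finsupp.sumElim (Finsupp.single r d₁) (g r)) :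
    ∃ b ≤ g r, c = Finsupp.sumElim (Finsupp.single r d₁) b := by
  obtain ⟨a, b, rfl⟩ : ∃ a b, c = Finsupp.sumElim a b :=
    ⟨_, _, (Finsupp.comapDomain_sumElim_comapDomain c).symm⟩
  obtain ⟨ha, hb⟩ := Finsupp.sumElim_le_sumElim_iff.mp hle
  rw [degX_sumElim] at hc
  refine ⟨b, hb, ?_⟩
  rw [Finsupp.eq_of_le_of_degree_eq ha (by rw [hc, Finsupp.degree_single])]

theorem mem_nagataDivisors {e : ℕ} {s : Fin m →₀ ℕ} :
    s ∈ nagataDivisors g e ↔ (∃ r, s ≤ g r) ∧ s.degree = e := by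
  simp [nagataDivisors, Finsupp.degree_eq_sum]

theorem map_Tbi_cActLinearMap_nagata (hd₁ : d₁ ≠ 0) {d₂ j : ℕ}
    (hgdeg : ∀ r, (g r).degree = d₂) (hj : j ≤ d₂) :
    (Tbi K d₁ j).map (cActLinearMap (nagata K d₁ g)) =
      restrictSupport K
        ↑((nagataDivisors g (d₂ - j)).image (Finsupp.sumElim (0 : Fin (n + 1) →₀ ℕ))) := by
  simp only [Tbi_eq_span, Submodule.map_span, restrictSupport_eq_span, Finset.coe_image,
    Set.image_image]
  apply le_antisymm
  · rw [Submodule.span_le]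
    rintro _ ⟨c, ⟨hcX, hcU⟩, rfl⟩
    change cAct (monomial c 1) (nagata K d₁ g) ∈ _
    by_cases hle : ∃ r, c ≤ Finsupp.sumElim (Finsupp.single r d₁) (g r)
    · obtain ⟨r, hr⟩ := hle
      obtain ⟨b, hb, rfl⟩ := eq_sumElim_of_le_nagata_exponent hcX hr
      rw [degU_sumElim] at hcU
      rw [cAct_monomial_sumElim_nagata hd₁ hb]
      refine Submodule.subset_span ⟨g r - b, mem_nagataDivisors.mpr ⟨⟨r, tsub_le_self⟩, ?_⟩, rfl⟩
      rw [Finsupp.degree_tsub_of_le hb, hgdeg, hcU]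
    · rw [cAct_monomial_nagata, Finset.sum_eq_zero fun r _ => if_neg (not_exists.mp hle r)]
      exact zero_mem _
  · rw [Submodule.span_le]
    rintro _ ⟨s, hs, rfl⟩
    obtain ⟨⟨r, hsr⟩, hsdeg⟩ := mem_nagataDivisors.mp hs
    refine Submodule.subset_span
      ⟨Finsupp.sumElim (Finsupp.single r d₁) (g r - s), ⟨?_, ?_⟩, ?_⟩
    · rw [degX_sumElim, Finsupp.degree_single]
    · rw [degU_sumElim, Finsupp.degree_tsub_of_le hsr, hgdeg, hsdeg]
      omega
    · change cAct _ _ = _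
      rw [cAct_monomial_sumElim_nagata hd₁ tsub_le_self, tsub_tsub_cancel_of_le hsr]

end Nagata

theorem stmt_3_general {K : Type*} [Field K] (n m d₁ d₂ : ℕ)
    (hd₁ : 1 ≤ d₁)
    (g : Fin (n + 1) → (Fin m →₀ ℕ))
    (hgdeg : ∀ r, (∑ k, g r k) = d₂)
    (f : MvPolynomial (Fin (n + 1) ⊕ Fin m) K)
    (hf : f = ∑ r, MvPolynomial.X (Sum.inl r) ^ d₁ *
      MvPolynomial.monomial ((g r).mapDomain Sum.inr) 1)
    (j : ℕ) (hjd : j ≤ d₂) :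
    Module.finrank K (Abi f d₁ j) =
      (((Finset.univ : Finset (Fin (n + 1))).biUnion fun r => Finset.Iic (g r)).filter
        fun s => (∑ k, s k) = d₂ - j).card := by
  have hf' : f = nagata K d₁ g := hf
  have hgdeg' : ∀ r, (g r).degree = d₂ := fun r => (Finsupp.degree_eq_sum _).trans (hgdeg r)
  rw [hf', finrank_Abi_eq, map_Tbi_cActLinearMap_nagata (by omega) hgdeg' hjd,
    finrank_restrictSupport, Finset.card_image_of_injective _
      fun _ _ h => Finsupp.ext fun k => DFunLike.congr_fun h (Sum.inr k)]
  rfl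

theorem stmt_3 {K : Type*} [Field K] [CharZero K] (n m d₁ d₂ : ℕ)
    (hd₁ : 1 ≤ d₁) (hd₂ : 2 ≤ d₂)
    (g : Fin (n + 1) → (Fin m →₀ ℕ))
    (hgdeg : ∀ r, (∑ k, g r k) = d₂)
    (hginj : Function.Injective g)
    (f : MvPolynomial (Fin (n + 1) ⊕ Fin m) K)
    (hf : f = ∑ r, MvPolynomial.X (Sum.inl r) ^ d₁ *
      MvPolynomial.monomial ((g r).mapDomain Sum.inr) 1)
    (j : ℕ) (hjd : j ≤ d₂) :
    Module.finrank K (Abi f d₁ j) =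
      (((Finset.univ : Finset (Fin (n + 1))).biUnion fun r => Finset.Iic (g r)).filter
        fun s => (∑ k, s k) = d₂ - j).card :=
  stmt_3_general n m d₁ d₂ hd₁ g hgdeg f hf j hjd

end CW
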